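/- Let A = {a_s(n_s)}_{s=1}^k be a finite system of residue classes and let m_1,...,m_k ∈ ℤ with gcd(m_s, n_s) = 1 for each s. Put S = { {Σ_{s∈I} m_s/n_s} : I ⊆ {1,...,k} }. If y is an integer with w_A(y) = m(A), then |S| ≥ lcm{ n_s : s ∈ I_y }, where I_y = {1 ≤ s ≤ k : y ≡ a_s (mod n_s)}. -/

import Mathlib

open Finset

noncomputable def ee (q : ℚ) : ℂ := Complex.exp (2 * Real.pi * Complex.I * q)

lemma ee_add (p q : ℚ) : ee (p + q) = ee p * ee q := by
  unfold ee; rw [← Complex.exp_add]; congr 1; push_cast; ring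

lemma ee_ne_zero (q : ℚ) : ee q ≠ 0 := Complex.exp_ne_zero _

lemma ee_zero : ee 0 = 1 := by simp [ee]

lemma ee_eq_one_iff {q : ℚ} : ee q = 1 ↔ ∃ z : ℤ, q = z := by
  unfold ee
  rw [Complex.exp_eq_one_iff]
  constructor
  · rintro ⟨z, hz⟩
    refine ⟨z, ?_⟩
    have h2 : (2 * Real.pi * Complex.I : ℂ) ≠ 0 := by
      simp [Real.pi_ne_zero, Complex.I_ne_zero]
    have h3 : (2 * Real.pi * Complex.I : ℂ) * q = (2 * Real.pi * Complex.I) * z := by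
      rw [hz]; ring
    have := mul_left_cancel₀ h2 h3
    exact_mod_cast this
  · rintro ⟨z, hz⟩
    exact ⟨z, by rw [hz]; push_cast; ring⟩

lemma ee_int (z : ℤ) : ee z = 1 := ee_eq_one_iff.mpr ⟨z, rfl⟩

lemma ee_nat_pow (q : ℚ) (x : ℕ) : ee (q * x) = ee q ^ x := by
  unfold ee; rw [← Complex.exp_nat_mul]; congr 1; push_cast; ring

lemma ee_sum {α : Type*} (s : Finset α) (f : α → ℚ) :
    ee (∑ i ∈ s, f i) = ∏ i ∈ s, ee (f i) := by
  unfold ee; rw [← Complex.exp_sum]; congr 1; push_cast; rw [Finset.mul_sum]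

lemma orth {L : ℕ} (q : ℚ) (hzq : ∃ z : ℤ, q * L = z) (hq : ¬ ∃ z : ℤ, q = z) :
    ∑ x ∈ Finset.range L, ee (q * x) = 0 := by
  have hne : ee q ≠ 1 := fun h => hq (ee_eq_one_iff.mp h)
  obtain ⟨z, hz⟩ := hzq
  have hpow : ee q ^ L = 1 := by rw [← ee_nat_pow, hz, ee_int]
  calc ∑ x ∈ Finset.range L, ee (q * x) = ∑ x ∈ Finset.range L, ee q ^ x :=
        Finset.sum_congr rfl fun x _ => ee_nat_pow q x
    _ = (ee q ^ L - 1) / (ee q - 1) := geom_sum_eq hne L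
    _ = 0 := by rw [hpow]; simp

section main

variable {k : ℕ} (a : Fin k → ℤ) (n : Fin k → ℕ) (m : Fin k → ℤ) (Sc : Finset (Fin k))

/-- the product `∏_{s ∈ Sc} (1 - e(m_s (x - a_s)/n_s))`. -/
noncomputable def Ffun (x : ℤ) : ℂ :=
  ∏ s ∈ Sc, (1 - ee ((m s : ℚ) * ((x : ℚ) - (a s : ℚ)) / (n s : ℚ)))

/-- the exponential sum `ν(θ)`. -/
noncomputable def nufun (L : ℕ) (θ : ℚ) : ℂ :=
  ∑ x ∈ Finset.range L, Ffun a n m Sc (x : ℤ) * ee (-(θ * (x : ℚ)))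

variable (hn : ∀ s, 0 < n s)
include hn

lemma ee_factor_eq (x x' : ℤ) (s : Fin k) (h : (n s : ℤ) ∣ x - x') :
    ee ((m s : ℚ) * ((x : ℚ) - (a s : ℚ)) / (n s : ℚ))
      = ee ((m s : ℚ) * ((x' : ℚ) - (a s : ℚ)) / (n s : ℚ)) := by
  obtain ⟨c, hc⟩ := h
  have hns : (n s : ℚ) ≠ 0 := Nat.cast_ne_zero.mpr (hn s).ne'
  have hx : (x : ℚ) = (x' : ℚ) + (n s : ℚ) * (c : ℚ) := by
    have h1 : (x : ℚ) - (x' : ℚ) = (n s : ℚ) * (c : ℚ) := by exact_mod_cast hc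
    linarith
  have harg : (m s : ℚ) * ((x : ℚ) - (a s : ℚ)) / (n s : ℚ)
      = (m s : ℚ) * ((x' : ℚ) - (a s : ℚ)) / (n s : ℚ) + ((m s * c : ℤ) : ℚ) := by
    rw [hx]; push_cast; field_simp; ring
  rw [harg, ee_add, ee_int, mul_one]

lemma ee_factor_one (x : ℤ) (s : Fin k) (h : (n s : ℤ) ∣ x - a s) :
    ee ((m s : ℚ) * ((x : ℚ) - (a s : ℚ)) / (n s : ℚ)) = 1 := by
  rw [ee_factor_eq a n m hn x (a s) s h]
  rw [show (m s : ℚ) * (((a s : ℤ) : ℚ) - (a s : ℚ)) / (n s : ℚ) = 0 by ring, ee_zero]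

lemma Ffun_periodic (x x' : ℤ) (h : ∀ s, (n s : ℤ) ∣ x - x') :
    Ffun a n m Sc x = Ffun a n m Sc x' := by
  unfold Ffun
  exact Finset.prod_congr rfl fun s _ => by rw [ee_factor_eq a n m hn x x' s (h s)]

lemma Ffun_shift (N L : ℕ) (y : ℤ) (hN : 0 < N)
    (hsupp : ∀ x : ℤ, Ffun a n m Sc x ≠ 0 → (N : ℤ) ∣ x - y) (θ : ℚ) :
    nufun a n m Sc L (θ - 1 / N) = ee ((y : ℚ) / N) * nufun a n m Sc L θ := by
  unfold nufun
  rw [Finset.mul_sum]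
  refine Finset.sum_congr rfl fun x _ => ?_
  have hsplit : ee (-((θ - 1 / N) * (x : ℚ)))
      = ee ((x : ℚ) / N) * ee (-(θ * (x : ℚ))) := by
    rw [← ee_add]; congr 1; field_simp; ring
  rw [hsplit]
  have hkey : Ffun a n m Sc (x : ℤ) * ee (((x : ℕ) : ℚ) / N)
      = Ffun a n m Sc (x : ℤ) * ee ((y : ℚ) / N) := by
    by_cases hFx : Ffun a n m Sc (x : ℤ) = 0
    · rw [hFx]; ring
    · obtain ⟨c, hc⟩ := hsupp (x : ℤ) hFx
      have hNq : (N : ℚ) ≠ 0 := Nat.cast_ne_zero.mpr hN.ne'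
      have hxq : ((x : ℕ) : ℚ) = (y : ℚ) + (N : ℚ) * (c : ℚ) := by
        have : ((x : ℤ) : ℚ) - (y : ℚ) = (N : ℚ) * (c : ℚ) := by exact_mod_cast hc
        push_cast at this ⊢
        linarith
      have : ((x : ℕ) : ℚ) / N = (y : ℚ) / N + ((c : ℤ) : ℚ) := by
        rw [hxq]; push_cast; field_simp
      rw [this, ee_add, ee_int, mul_one]
  calc Ffun a n m Sc (x:ℤ) * (ee ((x:ℚ)/N) * ee (-(θ * (x:ℚ))))
      = (Ffun a n m Sc (x:ℤ) * ee ((x:ℚ)/N)) * ee (-(θ * (x:ℚ))) := by ring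
    _ = (Ffun a n m Sc (x:ℤ) * ee ((y:ℚ)/N)) * ee (-(θ * (x:ℚ))) := by rw [hkey]
    _ = ee ((y:ℚ)/N) * (Ffun a n m Sc (x:ℤ) * ee (-(θ * (x:ℚ)))) := by ring


/-- integrality of `L * ∑_{s∈I} m_s/n_s` -/
lemma sum_frac_int (L : ℕ) (hnL : ∀ s, n s ∣ L) (I : Finset (Fin k)) :
    ∃ z : ℤ, (∑ s ∈ I, (m s : ℚ) / (n s : ℚ)) * L = z := by
  refine ⟨∑ s ∈ I, m s * ((L / n s : ℕ) : ℤ), ?_⟩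
  rw [Finset.sum_mul, Int.cast_sum]
  refine Finset.sum_congr rfl fun s _ => ?_
  have hns : (n s : ℚ) ≠ 0 := Nat.cast_ne_zero.mpr (hn s).ne'
  have hL : ((L / n s : ℕ) : ℚ) * (n s : ℚ) = (L : ℚ) := by
    exact_mod_cast congrArg (Nat.cast : ℕ → ℚ) (Nat.div_mul_cancel (hnL s))
  rw [div_mul_eq_mul_div, ← hL, mul_div_assoc, mul_div_cancel_right₀ _ hns,
    Int.cast_mul, Int.cast_natCast]

lemma K1 (L : ℕ) (hnL : ∀ s, n s ∣ L) (θ : ℚ) (hθL : ∃ z : ℤ, θ * L = z)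
    (hν : nufun a n m Sc L θ ≠ 0) :
    ∃ I : Finset (Fin k), Int.fract (∑ s ∈ I, (m s : ℚ) / (n s : ℚ)) = Int.fract θ := by
  by_contra hcon
  push_neg at hcon
  apply hν
  unfold nufun
  have hexp : ∀ x : ℕ, Ffun a n m Sc (x : ℤ) * ee (-(θ * (x : ℚ)))
      = ∑ I ∈ Sc.powerset,
          (∏ s ∈ I, (- ee (-((m s : ℚ) * (a s : ℚ) / (n s : ℚ)))))
            * ee (((∑ s ∈ I, (m s : ℚ) / (n s : ℚ)) - θ) * (x : ℚ)) := by
    intro x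
    have h1 : Ffun a n m Sc (x : ℤ)
        = ∑ I ∈ Sc.powerset, ∏ s ∈ I,
            (- ee ((m s : ℚ) * (((x:ℤ) : ℚ) - (a s : ℚ)) / (n s : ℚ))) := by
      unfold Ffun
      rw [Finset.prod_congr rfl (fun s _ => sub_eq_neg_add 1
        (ee ((m s : ℚ) * (((x:ℤ) : ℚ) - (a s : ℚ)) / (n s : ℚ))))]
      rw [Finset.prod_add]
      exact Finset.sum_congr rfl fun I _ => by simp
    rw [h1, Finset.sum_mul]
    refine Finset.sum_congr rfl fun I hI => ?_
    have h2 : ∀ s ∈ I, (- ee ((m s : ℚ) * (((x:ℤ) : ℚ) - (a s : ℚ)) / (n s : ℚ)))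
        = (- ee (-((m s : ℚ) * (a s : ℚ) / (n s : ℚ)))) * ee (((m s : ℚ) / (n s : ℚ)) * (x : ℚ)) := by
      intro s _
      have hns : (n s : ℚ) ≠ 0 := Nat.cast_ne_zero.mpr (hn s).ne'
      have harg : (m s : ℚ) * (((x:ℤ) : ℚ) - (a s : ℚ)) / (n s : ℚ)
          = -((m s : ℚ) * (a s : ℚ) / (n s : ℚ)) + ((m s : ℚ) / (n s : ℚ)) * (x : ℚ) := by
        push_cast
        field_simp
        ring
      rw [harg, ee_add, ← neg_mul]
    rw [Finset.prod_congr rfl h2, Finset.prod_mul_distrib, ← ee_sum, ← Finset.sum_mul]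
    rw [mul_assoc]
    congr 1
    rw [← ee_add]
    congr 1
    ring
  rw [Finset.sum_congr rfl fun x _ => hexp x, Finset.sum_comm]
  refine Finset.sum_eq_zero fun I _ => ?_
  rw [← Finset.mul_sum]
  have h0 : ∑ x ∈ Finset.range L,
      ee (((∑ s ∈ I, (m s : ℚ) / (n s : ℚ)) - θ) * (x : ℚ)) = 0 := by
    apply orth
    · obtain ⟨z1, hz1⟩ := sum_frac_int n m hn L hnL I
      obtain ⟨z2, hz2⟩ := hθL
      exact ⟨z1 - z2, by push_cast; rw [sub_mul, hz1, hz2]⟩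
    · intro ⟨z, hz⟩
      exact hcon I (Int.fract_eq_fract.mpr ⟨z, hz⟩)
  rw [h0, mul_zero]

lemma K3 (L : ℕ) (hL : 0 < L) (hnL : ∀ s, n s ∣ L) (y : ℤ) (y₀ : ℕ) (hy₀ : y₀ < L)
    (hyy : (L : ℤ) ∣ (y₀ : ℤ) - y) (hFy : Ffun a n m Sc y ≠ 0) :
    ∃ j : ℕ, j < L ∧ nufun a n m Sc L ((j : ℚ) / L) ≠ 0 := by
  by_contra hcon
  push_neg at hcon
  have hT : ∑ j ∈ Finset.range L, nufun a n m Sc L ((j : ℚ) / L) * ee ((j : ℚ) * y₀ / L) = 0 :=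
    Finset.sum_eq_zero fun j hj => by
      rw [hcon j (Finset.mem_range.mp hj), zero_mul]
  have hT2 : ∑ j ∈ Finset.range L, nufun a n m Sc L ((j : ℚ) / L) * ee ((j : ℚ) * y₀ / L)
      = (Ffun a n m Sc (y₀ : ℤ)) * L := by
    unfold nufun
    have hLq : (L : ℚ) ≠ 0 := Nat.cast_ne_zero.mpr hL.ne'
    calc ∑ j ∈ Finset.range L, (∑ x ∈ Finset.range L,
            Ffun a n m Sc (x : ℤ) * ee (-((j : ℚ)/L * (x : ℚ)))) * ee ((j : ℚ) * y₀ / L)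
        = ∑ j ∈ Finset.range L, ∑ x ∈ Finset.range L, Ffun a n m Sc (x : ℤ)
            * ee ((((y₀ : ℚ) - x) / L) * (j : ℚ)) := by
          refine Finset.sum_congr rfl fun j _ => ?_
          rw [Finset.sum_mul]
          refine Finset.sum_congr rfl fun x _ => ?_
          rw [mul_assoc, ← ee_add]
          congr 2
          field_simp
          ring
      _ = ∑ x ∈ Finset.range L, Ffun a n m Sc (x : ℤ)
            * ∑ j ∈ Finset.range L, ee ((((y₀ : ℚ) - x) / L) * (j : ℚ)) := by
          rw [Finset.sum_comm]
          exact Finset.sum_congr rfl fun x _ => (Finset.mul_sum _ _ _).symm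
      _ = (Ffun a n m Sc (y₀ : ℤ)) * L := by
          rw [Finset.sum_eq_single_of_mem y₀ (Finset.mem_range.mpr hy₀)]
          · rw [show (((y₀ : ℚ) - y₀) / L) = 0 by simp]
            simp [ee_zero]
          · intro x hx hxne
            have hiz : ∑ j ∈ Finset.range L, ee ((((y₀ : ℚ) - x) / L) * (j : ℚ)) = 0 := by
              apply orth
              · exact ⟨(y₀ : ℤ) - x, by push_cast; field_simp⟩
              · rintro ⟨z, hz⟩
                have hz' : ((y₀ : ℚ) - x) = z * L := by
                  field_simp at hz
                  linarith
                have hzz : (y₀ : ℤ) - (x : ℤ) = (L : ℤ) * z := by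
                  have hq : (((y₀:ℤ) - (x:ℤ) : ℤ) : ℚ) = (((L:ℤ) * z : ℤ) : ℚ) := by
                    push_cast
                    linarith [hz']
                  exact_mod_cast hq
                have h1 : ((y₀ : ℕ) : ℤ) < L := by exact_mod_cast hy₀
                have h2 : ((x : ℕ) : ℤ) < L := by exact_mod_cast Finset.mem_range.mp hx
                have h3 : (0 : ℤ) ≤ (y₀ : ℤ) := Int.ofNat_nonneg _
                have h4 : (0 : ℤ) ≤ ((x : ℕ) : ℤ) := Int.ofNat_nonneg _
                have h0 : (y₀ : ℤ) - x = 0 := by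
                  refine Int.eq_zero_of_abs_lt_dvd ⟨z, hzz⟩ ?_
                  rw [abs_lt]
                  constructor <;> [linarith; linarith]
                have : (y₀ : ℤ) = (x : ℕ) := by linarith
                exact hxne (by exact_mod_cast this.symm)
            rw [hiz, mul_zero]
  have hFy0 : Ffun a n m Sc (y₀ : ℤ) = Ffun a n m Sc y := by
    refine Ffun_periodic a n m Sc hn _ _ fun s => ?_
    exact dvd_trans (Int.natCast_dvd_natCast.mpr (hnL s)) hyy
  rw [hFy0] at hT2
  have h00 : Ffun a n m Sc y * (L : ℂ) = 0 := by rw [← hT2, hT]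
  rcases mul_eq_zero.mp h00 with h | h
  · exact hFy h
  · exact (Nat.cast_ne_zero.mpr hL.ne' : ((L : ℕ) : ℂ) ≠ 0) h


end main

set_option maxHeartbeats 1000000 in
/-- **Remark 4.1 (lower bound for `|S|`).**
Let `A = {a s (n s)}_{s=1}^k` and let `m₁,…,m_k ∈ ℤ` be relatively prime to
`n₁,…,n_k` respectively.  Put `S = { {∑_{s∈I} m_s/n_s} : I ⊆ {1,…,k} }`.  If `y ∈ ℤ`
satisfies `w_A(y) = m(A)` (the covering multiplicity), then
`|S| ≥ lcm { n_s : s ∈ I_y }`, where `I_y = {s : y ≡ a_s (mod n_s)}`. -/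
theorem stmt19 (k : ℕ) (a : Fin k → ℤ) (n : Fin k → ℕ) (hn : ∀ s, 0 < n s)
    (m : Fin k → ℤ) (hcop : ∀ s, Int.gcd (m s) (n s) = 1) (y : ℤ)
    (hy : (Finset.univ.filter fun s : Fin k => (n s : ℤ) ∣ y - a s).card =
      sInf (Set.range fun x : ℤ =>
        (Finset.univ.filter fun s : Fin k => (n s : ℤ) ∣ x - a s).card)) :
    (Finset.univ.filter fun s : Fin k => (n s : ℤ) ∣ y - a s).lcm n ≤
      (Finset.image
        (fun I : Finset (Fin k) => Int.fract (∑ s ∈ I, (m s : ℚ) / (n s : ℚ)))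
        Finset.univ).card := by
  classical
  set Iy : Finset (Fin k) := Finset.univ.filter (fun s : Fin k => (n s : ℤ) ∣ y - a s) with hIy
  set Sc : Finset (Fin k) :=
    Finset.univ.filter (fun s : Fin k => ¬ (n s : ℤ) ∣ y - a s) with hSc
  set N : ℕ := Iy.lcm n with hNdef
  set P : ℕ := ∏ s, n s with hPdef
  set L : ℕ := N * P with hLdef
  have hP0 : 0 < P := Finset.prod_pos fun s _ => hn s
  have hN0 : 0 < N := by
    rcases Nat.eq_zero_or_pos N with h | h
    · exfalso
      rw [hNdef, Finset.lcm_eq_zero_iff] at h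
      obtain ⟨s, -, hs0⟩ := h
      exact (hn s).ne' hs0
    · exact h
  have hL0 : 0 < L := Nat.mul_pos hN0 hP0
  have hnL : ∀ s, n s ∣ L := fun s =>
    dvd_mul_of_dvd_right (Finset.dvd_prod_of_mem n (Finset.mem_univ s)) N
  have hNq : (N : ℚ) ≠ 0 := Nat.cast_ne_zero.mpr hN0.ne'
  have hPq : (P : ℚ) ≠ 0 := Nat.cast_ne_zero.mpr hP0.ne'
  have hLq : (L : ℚ) ≠ 0 := Nat.cast_ne_zero.mpr hL0.ne'
  -- F does not vanish at y
  have hFy : Ffun a n m Sc y ≠ 0 := by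
    unfold Ffun
    rw [Finset.prod_ne_zero_iff]
    intro s hs
    rw [hSc, Finset.mem_filter] at hs
    intro h0
    have h1 : ee ((m s : ℚ) * ((y : ℚ) - (a s : ℚ)) / (n s : ℚ)) = 1 :=
      (sub_eq_zero.mp h0).symm
    obtain ⟨z, hz⟩ := ee_eq_one_iff.mp h1
    have hns : (n s : ℚ) ≠ 0 := Nat.cast_ne_zero.mpr (hn s).ne'
    have hzz : (m s) * (y - a s) = z * (n s : ℤ) := by
      have h2 : (m s : ℚ) * ((y : ℚ) - (a s : ℚ)) = (z : ℚ) * (n s : ℚ) := by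
        field_simp at hz
        linarith
      exact_mod_cast h2
    have hdvd : (n s : ℤ) ∣ (m s) * (y - a s) := ⟨z, by rw [hzz]; ring⟩
    have hcop' : IsCoprime (n s : ℤ) (m s) := by
      rw [Int.isCoprime_iff_gcd_eq_one, Int.gcd_comm]
      exact hcop s
    exact hs.2 (hcop'.dvd_of_dvd_mul_left hdvd)
  -- support of F
  have hsupp : ∀ x : ℤ, Ffun a n m Sc x ≠ 0 → (N : ℤ) ∣ x - y := by
    intro x hFx
    have hmiss : ∀ s : Fin k, ¬ (n s : ℤ) ∣ y - a s → ¬ (n s : ℤ) ∣ x - a s := by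
      intro s hsy hsx
      apply hFx
      unfold Ffun
      apply Finset.prod_eq_zero (i := s)
      · rw [hSc, Finset.mem_filter]; exact ⟨Finset.mem_univ s, hsy⟩
      · rw [ee_factor_one a n m hn x s hsx, sub_self]
    set Ix : Finset (Fin k) :=
      Finset.univ.filter (fun s : Fin k => (n s : ℤ) ∣ x - a s) with hIx
    have hsub : Ix ⊆ Iy := by
      intro s hs
      rw [hIx, Finset.mem_filter] at hs
      rw [hIy, Finset.mem_filter]
      refine ⟨Finset.mem_univ s, ?_⟩
      by_contra hsy
      exact hmiss s hsy hs.2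
    have hcard : Iy.card ≤ Ix.card := by
      rw [hy]
      exact Nat.sInf_le ⟨x, rfl⟩
    have hIxy : Ix = Iy := Finset.eq_of_subset_of_card_le hsub hcard
    have hdvd : ∀ s ∈ Iy, (n s : ℤ) ∣ x - y := by
      intro s hs
      have h1 : (n s : ℤ) ∣ x - a s := by
        rw [← hIxy, hIx, Finset.mem_filter] at hs
        exact hs.2
      have h2 : (n s : ℤ) ∣ y - a s := by
        rw [hIy, Finset.mem_filter] at hs
        exact hs.2
      have h3 : x - y = (x - a s) - (y - a s) := by ring
      rw [h3]
      exact dvd_sub h1 h2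
    have hnat : N ∣ (x - y).natAbs := by
      rw [hNdef]
      apply Finset.lcm_dvd
      intro s hs
      have h4 := Int.natAbs_dvd_natAbs.mpr (hdvd s hs)
      simpa using h4
    exact Int.dvd_natAbs.mp (Int.natCast_dvd_natCast.mpr hnat)
  -- the shift identity
  have hshift := Ffun_shift a n m Sc hn N L y hN0 hsupp
  -- a base point where ν does not vanish
  have hLz : (0 : ℤ) < (L : ℤ) := by exact_mod_cast hL0
  have hmod_nonneg : 0 ≤ y % (L : ℤ) := Int.emod_nonneg y hLz.ne'
  have hmod_lt : y % (L : ℤ) < L := Int.emod_lt_of_pos y hLz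
  set y₀ : ℕ := (y % (L : ℤ)).toNat with hy₀def
  have hy₀cast : (y₀ : ℤ) = y % (L : ℤ) := Int.toNat_of_nonneg hmod_nonneg
  have hy₀L : y₀ < L := by
    have h5 : (y₀ : ℤ) < L := by rw [hy₀cast]; exact hmod_lt
    exact_mod_cast h5
  have hyy : (L : ℤ) ∣ (y₀ : ℤ) - y := by
    rw [hy₀cast, Int.emod_def]
    exact ⟨-(y / L), by ring⟩
  obtain ⟨j₀, hj₀L, hj₀⟩ := K3 a n m Sc hn L hL0 hnL y y₀ hy₀L hyy hFy
  -- iterate the shift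
  have hiter : ∀ i : ℕ, nufun a n m Sc L ((j₀ : ℚ) / L - (i : ℚ) / N) ≠ 0 := by
    intro i
    induction i with
    | zero => simpa using hj₀
    | succ i ih =>
      have harg : (j₀ : ℚ) / L - ((i + 1 : ℕ) : ℚ) / N
          = ((j₀ : ℚ) / L - (i : ℚ) / N) - 1 / N := by
        push_cast
        ring
      rw [harg, hshift]
      exact mul_ne_zero (ee_ne_zero _) ih
  have hLQ : (L : ℚ) = (N : ℚ) * P := by rw [hLdef]; push_cast; ring
  -- membership of the fractional parts in the image
  have hmem : ∀ i ∈ Finset.range N, Int.fract ((j₀ : ℚ) / L - (i : ℚ) / N)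
      ∈ Finset.image
        (fun I : Finset (Fin k) => Int.fract (∑ s ∈ I, (m s : ℚ) / (n s : ℚ)))
        Finset.univ := by
    intro i _
    have hθL : ∃ z : ℤ, ((j₀ : ℚ) / L - (i : ℚ) / N) * L = z := by
      refine ⟨(j₀ : ℤ) - (i : ℤ) * P, ?_⟩
      have hstep : ((j₀ : ℚ) / L - (i : ℚ) / N) * L = (j₀ : ℚ) - (i : ℚ) * P := by
        rw [hLQ]
        field_simp
      rw [hstep]
      push_cast
      ring
    obtain ⟨I, hI⟩ := K1 a n m Sc hn L hnL _ hθL (hiter i)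
    exact Finset.mem_image.mpr ⟨I, Finset.mem_univ I, hI⟩
  -- injectivity
  have hinj : Set.InjOn (fun i : ℕ => Int.fract ((j₀ : ℚ) / L - (i : ℚ) / N))
      ↑(Finset.range N) := by
    intro i hi i' hi' hEq
    simp only [Finset.coe_range, Set.mem_Iio] at hi hi'
    obtain ⟨z, hz⟩ := Int.fract_eq_fract.mp hEq
    have hz' : (i' : ℚ) / N - (i : ℚ) / N = (z : ℚ) := by linear_combination hz
    have hz2 : (i' : ℚ) - (i : ℚ) = (z : ℚ) * N := by
      field_simp at hz'
      linarith
    have hz3 : (i' : ℤ) - (i : ℤ) = (z : ℤ) * N := by exact_mod_cast hz2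
    have hb1 : (i : ℤ) < N := by exact_mod_cast hi
    have hb2 : (i' : ℤ) < N := by exact_mod_cast hi'
    have hb3 : (0 : ℤ) ≤ (i : ℤ) := Int.ofNat_nonneg _
    have hb4 : (0 : ℤ) ≤ (i' : ℤ) := Int.ofNat_nonneg _
    have h0 : (i' : ℤ) - (i : ℤ) = 0 := by
      refine Int.eq_zero_of_abs_lt_dvd (m := (N : ℤ)) ⟨z, by rw [hz3]; ring⟩ ?_
      rw [abs_lt]
      constructor <;> linarith
    have h6 : (i : ℤ) = (i' : ℤ) := by linarith
    exact_mod_cast h6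
  have hfin := Finset.card_le_card_of_injOn _ hmem hinj
  rw [Finset.card_range] at hfin
  exact hfin
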